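/- Let p be a prime and G a finite group having a strongly p-embedded subgroup. Let (K_i)_{i ∈ I} be a finite family of normal subgroups of G with ⋂_{i ∈ I} K_i = 1, and let J = {i ∈ I : p does not divide |K_i|}. Assume in addition that there exists a p-subgroup T ≤ G such that the normalizer N_G(T) is strongly p-embedded in G (this hypothesis holds, for example, whenever p² does not divide |G|). Then there exists j ∈ J such that the quotient G/K_j has a strongly p-embedded subgroup. -/

import Mathlib

/-- A proper subgroup `H < G` is strongly `p`-embedded if `p` divides `|H|` and, for every
`g ∈ G` with `g ∉ H`, `p` does not divide `|H ∩ gHg⁻¹|`. -/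
def IsStronglyPEmbedded (p : ℕ) {G : Type*} [Group G] (H : Subgroup G) : Prop :=
  H ≠ ⊤ ∧ (p ∣ Nat.card H) ∧
    ∀ g : G, g ∉ H →
      ¬ (p ∣ Nat.card ↥(H ⊓ Subgroup.map (MulAut.conj g).toMonoidHom H))

/-! Let `H = N_G(T)`. A subgroup `Q ≤ H` of order divisible by `p` lies in no conjugate `H^g`
with `g ∉ H`; hence `N_G(Q) ≤ H`, and by the normalizer condition in `p`-groups every
`p`-subgroup containing `Q` lies in `H`. So no normal `p`-subgroup of `G` contains `T`. Since
`y ^ |T| ∈ K_i` for every `y ∈ T K_i`, the intersection `⋂ T K_i` is a normal `p`-subgroup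
containing `T` as soon as all `T K_i` are normal; thus some `T K_j` is not normal.

If `p ∣ |K_j|`, a Sylow subgroup of `K_j` lies in a conjugate of `H`, and the Frattini argument
gives `G = H K_j`, which normalizes `T K_j`. So `K_j` is a `p'`-group, and then the normalizer of
the image of `T` in `G/K_j` is strongly `p`-embedded: it is proper because `T K_j` is not normal,
and an element `x` of order `p` in it and in its conjugate by `ḡ` lifts to elements of order `p`
in `H` and in `H^g`. These generate Sylow subgroups of the preimage of `⟨x⟩`, which has order
`p |K_j|`, so they are conjugate by some `w` over `⟨x⟩`; then `wg ∈ H`, whence `ḡ` lies in the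
normalizer. -/

open Subgroup QuotientGroup
open scoped Pointwise

section

variable {G : Type*} [Group G] {p : ℕ}

theorem card_conj_smul (g : G) (H : Subgroup G) : Nat.card ↥(MulAut.conj g • H) = Nat.card H :=
  (Nat.card_congr (equivSMul (MulAut.conj g) H).toEquiv).symm

theorem conj_smul_normalizer (g : G) (H : Subgroup G) :
    MulAut.conj g • normalizer (H : Set G) = normalizer ((MulAut.conj g • H : Subgroup G) : Set G) :=
  map_equiv_normalizer_eq H (MulAut.conj g)

theorem map_conj_smul {G' : Type*} [Group G'] (f : G →* G') (g : G) (H : Subgroup G) :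
    (MulAut.conj g • H).map f = MulAut.conj (f g) • H.map f := by
  ext x
  simp [pointwise_smul_def, mem_map]

namespace IsStronglyPEmbedded

variable {H : Subgroup G}

theorem conj_smul (hH : IsStronglyPEmbedded p H) (a : G) :
    IsStronglyPEmbedded p (MulAut.conj a • H) := by
  refine ⟨fun h => hH.1 ?_, card_conj_smul a H ▸ hH.2.1, fun g hg => ?_⟩
  · rw [← inv_smul_smul (MulAut.conj a) H, h]
    exact map_top_of_surjective _ (MulAut.conj a)⁻¹.surjective
  have hg' : a⁻¹ * g * a ∉ H := by
    rwa [mem_pointwise_smul_iff_inv_smul_mem, ← map_inv, MulAut.smul_def, MulAut.conj_apply,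
      inv_inv] at hg
  have hconj : MulAut.conj g * MulAut.conj a = MulAut.conj a * MulAut.conj (a⁻¹ * g * a) := by
    simp only [← map_mul]; group
  change ¬ p ∣ Nat.card ↥(MulAut.conj a • H ⊓ MulAut.conj g • MulAut.conj a • H)
  rw [smul_smul, hconj, mul_smul, ← smul_inf, card_conj_smul]
  exact hH.2.2 _ hg'

theorem mem_of_le_conj_smul (hH : IsStronglyPEmbedded p H) {Q : Subgroup G}
    (hQ : p ∣ Nat.card Q) (hQH : Q ≤ H) {g : G} (hQg : Q ≤ MulAut.conj g • H) : g ∈ H := by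
  by_contra hg
  exact hH.2.2 g hg (hQ.trans (card_dvd_of_le (le_inf hQH hQg)))

theorem normalizer_le (hH : IsStronglyPEmbedded p H) {Q : Subgroup G}
    (hQ : p ∣ Nat.card Q) (hQH : Q ≤ H) : normalizer (Q : Set G) ≤ H := fun g hg =>
  hH.mem_of_le_conj_smul hQ hQH <|
    calc Q = MulAut.conj g • Q := (mem_normalizer_iff_map_conj_eq.mp hg).symm
      _ ≤ MulAut.conj g • H := pointwise_smul_le_pointwise_smul_iff.mpr hQH

theorem le_of_isPGroup [Finite G] [Fact p.Prime] (hH : IsStronglyPEmbedded p H) {N Q : Subgroup G}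
    (hN : IsPGroup p N) (hQ : p ∣ Nat.card Q) (hQN : Q ≤ N) (hQH : Q ≤ H) : N ≤ H := by
  have := hN.isNilpotent
  have hNC : NormalizerCondition N := Group.normalizerCondition_of_isNilpotent
  by_contra hNH
  have hlt : H.subgroupOf N < ⊤ := lt_top_iff_ne_top.mpr (by rwa [Ne, subgroupOf_eq_top])
  obtain ⟨x, hxn, hxH⟩ := SetLike.exists_of_lt (hNC _ hlt)
  have hHN : p ∣ Nat.card ↥(H ⊓ N) := hQ.trans (card_dvd_of_le (le_inf hQH hQN))
  have hx : (x : G) ∈ normalizer ((H ⊓ N : Subgroup G) : Set G) := by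
    rw [← subgroupOf_map_subtype]
    exact le_normalizer_map N.subtype (mem_map_of_mem _ hxn)
  exact hxH (mem_subgroupOf.mpr (hH.normalizer_le hHN inf_le_left hx))

theorem not_normal_of_isPGroup [Finite G] [Fact p.Prime]
    (hH : IsStronglyPEmbedded p H) {N Q : Subgroup G} (hN : IsPGroup p N) (hQ : p ∣ Nat.card Q)
    (hQN : Q ≤ N) (hQH : Q ≤ H) : ¬ N.Normal := fun hNn =>
  hH.1 <| top_le_iff.mp <| (normalizer_eq_top_iff.mpr hNn).ge.trans <|
    hH.normalizer_le (hQ.trans (card_dvd_of_le hQN)) (hH.le_of_isPGroup hN hQ hQN hQH)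

theorem exists_sylow_le [Finite G] [Fact p.Prime] (hH : IsStronglyPEmbedded p H) :
    ∃ P : Sylow p G, (P : Subgroup G) ≤ H := by
  obtain ⟨PH⟩ : Nonempty (Sylow p H) := inferInstance
  have hdvd : p ∣ Nat.card ↥(PH.map H.subtype) := by
    rw [card_map_of_injective H.subtype_injective]
    exact PH.dvd_card_of_dvd_card hH.2.1
  obtain ⟨P, hP⟩ := (PH.2.map H.subtype).exists_le_sylow
  exact ⟨P, hH.le_of_isPGroup P.2 hdvd hP (map_subtype_le _)⟩

theorem sup_eq_top_of_dvd_card [Finite G] [Fact p.Prime] (hH : IsStronglyPEmbedded p H)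
    {K : Subgroup G} [K.Normal] (hK : p ∣ Nat.card K) : H ⊔ K = ⊤ := by
  obtain ⟨P, hPH⟩ := hH.exists_sylow_le
  obtain ⟨R⟩ : Nonempty (Sylow p K) := inferInstance
  have hR : p ∣ Nat.card ↥(R.map K.subtype) := by
    rw [card_map_of_injective K.subtype_injective]
    exact R.dvd_card_of_dvd_card hK
  obtain ⟨Q, hRQ⟩ := (R.2.map K.subtype).exists_le_sylow
  obtain ⟨c, rfl⟩ := MulAction.exists_smul_eq G P Q
  have hRc : R.map K.subtype ≤ MulAut.conj c • H :=
    hRQ.trans (pointwise_smul_le_pointwise_smul_iff.mpr hPH)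
  have htop : MulAut.conj c • H ⊔ K = ⊤ := top_le_iff.mp <| (Sylow.normalizer_sup_eq_top R).ge.trans
    (sup_le_sup_right ((hH.conj_smul c).normalizer_le hR hRc) K)
  rw [← smul_left_cancel_iff (MulAut.conj c), smul_sup, Normal.conj_smul_eq_self c K,
    Normal.conj_smul_eq_self c ⊤, htop]

theorem sup_normal_of_dvd_card [Finite G] [Fact p.Prime] {T K : Subgroup G} [K.Normal]
    (hH : IsStronglyPEmbedded p (normalizer (T : Set G))) (hK : p ∣ Nat.card K) :
    (T ⊔ K).Normal := by
  rw [← normalizer_eq_top_iff, eq_top_iff, ← hH.sup_eq_top_of_dvd_card hK]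
  exact sup_le normalizer_le_normalizer_sup_normal (le_sup_right.trans le_normalizer)

end IsStronglyPEmbedded

theorem pow_card_mem_of_mem_sup {T K : Subgroup G} [K.Normal] {y : G}
    (hy : y ∈ T ⊔ K) : y ^ Nat.card T ∈ K := by
  rw [← SetLike.mem_coe, mul_normal, Set.mem_mul] at hy
  obtain ⟨t, ht, k, hk, rfl⟩ := hy
  have ht1 : t ^ Nat.card T = 1 := orderOf_dvd_iff_pow_eq_one.mp (T.orderOf_dvd_natCard ht)
  rw [← QuotientGroup.eq_one_iff, QuotientGroup.mk_pow, QuotientGroup.mk_mul,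
    (QuotientGroup.eq_one_iff k).mpr hk, mul_one, ← QuotientGroup.mk_pow, ht1, QuotientGroup.mk_one]

theorem IsPGroup.iInf_sup [Finite G] [Fact p.Prime] {ι : Type*} {T : Subgroup G}
    (hT : IsPGroup p T) {K : ι → Subgroup G} [∀ i, (K i).Normal] (hK : ⨅ i, K i = ⊥) :
    IsPGroup p ↥(⨅ i, T ⊔ K i) := by
  obtain ⟨n, hn⟩ := IsPGroup.iff_card.mp hT
  refine fun y => ⟨n, Subtype.ext ?_⟩
  have : (y : G) ^ p ^ n ∈ ⨅ i, K i :=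
    mem_iInf.mpr fun i => hn ▸ pow_card_mem_of_mem_sup (mem_iInf.mp y.2 i)
  rw [hK, mem_bot] at this
  simpa using this

theorem IsPGroup.exists_isPGroup_le_map_eq [Finite G] [Fact p.Prime] {G' : Type*} [Group G']
    {f : G →* G'} (hf : Function.Surjective f) {P : Subgroup G'} (hP : IsPGroup p P)
    {T : Subgroup G} (hT : IsPGroup p T) (hTP : T.map f ≤ P) :
    ∃ S : Subgroup G, IsPGroup p S ∧ T ≤ S ∧ S.map f = P := by
  set Q := P.comap f
  have hTQ : T ≤ Q := map_le_iff_le_comap.mp hTP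
  obtain ⟨S, hS⟩ := (hT.comap_of_injective Q.subtype Q.subtype_injective).exists_le_sylow
  have hSP : (S : Subgroup Q).map (f.subgroupComap P) = ⊤ :=
    ((S.mapSurjective (f.subgroupComap_surjective_of_surjective P hf)).3 (hP.to_subgroup ⊤)
      le_top).symm
  refine ⟨S.map Q.subtype, S.2.map _, ?_, ?_⟩
  · have := map_mono (f := Q.subtype) hS
    rwa [← subgroupOf, subgroupOf_map_subtype, inf_of_le_left hTQ] at this
  · calc (S.map Q.subtype).map f = ((S : Subgroup Q).map (f.subgroupComap P)).map P.subtype := by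
          rw [Subgroup.map_map, Subgroup.map_map]; rfl
      _ = P := by rw [hSP, ← MonoidHom.range_eq_map, range_subtype]

theorem IsStronglyPEmbedded.exists_lift_of_orderOf_eq [Finite G] [Fact p.Prime]
    {H T K : Subgroup G} [K.Normal] (hH : IsStronglyPEmbedded p H) (hT : IsPGroup p T)
    (hTdvd : p ∣ Nat.card T) (hTH : T ≤ H) (hK : ¬ p ∣ Nat.card K) {x : G ⧸ K}
    (hx : orderOf x = p) (hxT : x ∈ normalizer ((T.map (mk' K) : Subgroup (G ⧸ K)) : Set (G ⧸ K))) :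
    ∃ s ∈ H, mk' K s = x ∧ orderOf s = p := by
  have hP : IsPGroup p ↥(zpowers x ⊔ T.map (mk' K)) :=
    (IsPGroup.of_card (by rw [Nat.card_zpowers, hx, pow_one])).to_sup_of_normal_right'
      (hT.map _) (zpowers_le.mpr hxT)
  obtain ⟨S, hS, hTS, hSP⟩ := hP.exists_isPGroup_le_map_eq (mk'_surjective K) hT le_sup_right
  obtain ⟨s, hsS, rfl⟩ : x ∈ S.map (mk' K) := hSP ▸ mem_sup_left (mem_zpowers x)
  have hSK : Disjoint S K := by
    obtain ⟨n, hn⟩ := IsPGroup.iff_card.mp hS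
    exact disjoint_of_coprime_natCard
      (hn ▸ Nat.Coprime.pow_left n ((Nat.Prime.coprime_iff_not_dvd Fact.out).mpr hK))
  have hs1 : s ^ p = 1 := disjoint_def.mp hSK (pow_mem hsS p)
    ((QuotientGroup.eq_one_iff _).mp (by rw [← mk'_apply, map_pow, ← hx, pow_orderOf_eq_one]))
  have hs : s ≠ 1 := by
    rintro rfl
    rw [map_one, orderOf_one] at hx
    exact (Fact.out : p.Prime).ne_one hx.symm
  exact ⟨s, hH.le_of_isPGroup hS hTdvd hTS hTH hsS, rfl, orderOf_eq_prime hs1 hs⟩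

theorem exists_mem_conj_smul_eq_of_card_eq [Finite G] [Fact p.Prime] {W A B : Subgroup G}
    (hA : A ≤ W) (hB : B ≤ W) (hAc : Nat.card A = p ^ (Nat.card W).factorization p)
    (hBc : Nat.card B = p ^ (Nat.card W).factorization p) :
    ∃ w ∈ W, MulAut.conj w • B = A := by
  have hcard {C : Subgroup G} (hC : C ≤ W) : Nat.card (C.subgroupOf W) = Nat.card C :=
    Nat.card_congr (subgroupOfEquivOfLe hC).toEquiv
  obtain ⟨w, hw⟩ := MulAction.exists_smul_eq W (Sylow.ofCard _ ((hcard hB).trans hBc))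
    (Sylow.ofCard _ ((hcard hA).trans hAc))
  have h := congrArg (fun P : Sylow p W => (P : Subgroup W)) hw
  simp only [Sylow.coe_subgroup_smul, Sylow.coe_ofCard] at h
  rw [conj_smul_subgroupOf hB, subgroupOf_inj, inf_of_le_left hA,
    inf_of_le_left (conj_smul_le_of_le hB w)] at h
  exact ⟨w, w.2, h⟩

theorem exists_conj_smul_zpowers_eq [Finite G] [Fact p.Prime] {K : Subgroup G} [K.Normal]
    (hK : ¬ p ∣ Nat.card K) {x : G ⧸ K} (hx : orderOf x = p) {s s' : G} (hs : mk' K s = x)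
    (hs' : mk' K s' = x) (hso : orderOf s = p) (hso' : orderOf s' = p) :
    ∃ w : G, mk' K w ∈ zpowers x ∧ MulAut.conj w • zpowers s' = zpowers s := by
  set W := (zpowers x).comap (mk' K)
  have hW : (Nat.card W).factorization p = 1 := by
    have : Nat.card W = Nat.card K * p := by
      rw [← hx, ← Nat.card_zpowers]
      exact card_preimage_mk K (zpowers x : Set (G ⧸ K))
    rw [this, Nat.factorization_mul Nat.card_pos.ne' (Fact.out : p.Prime).ne_zero]
    simp [Nat.factorization_eq_zero_of_not_dvd hK, (Fact.out : p.Prime).factorization_self]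
  have hmem {t : G} (ht : mk' K t = x) : zpowers t ≤ W :=
    zpowers_le.mpr (by rw [mem_comap, ht]; exact mem_zpowers x)
  exact exists_mem_conj_smul_eq_of_card_eq (hmem hs) (hmem hs')
    (by rw [Nat.card_zpowers, hso, hW, pow_one]) (by rw [Nat.card_zpowers, hso', hW, pow_one])

theorem dvd_card_map_mk' [Finite G] [Fact p.Prime] {H K : Subgroup G} [K.Normal]
    (hH : p ∣ Nat.card H) (hK : ¬ p ∣ Nat.card K) : p ∣ Nat.card ↥(H.map (mk' K)) := by
  obtain ⟨⟨y, hyH⟩, hyo⟩ := exists_prime_orderOf_dvd_card' p hH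
  rw [orderOf_mk] at hyo
  have hy : orderOf (mk' K y) = p := by
    rcases (Nat.dvd_prime Fact.out).mp (hyo ▸ orderOf_map_dvd (mk' K) y) with h | h
    · exact absurd (hyo ▸ K.orderOf_dvd_natCard
        ((QuotientGroup.eq_one_iff y).mp (orderOf_eq_one_iff.mp h))) hK
    · exact h
  exact hy ▸ Subgroup.orderOf_dvd_natCard _ (mem_map_of_mem _ hyH)

theorem IsStronglyPEmbedded.normalizer_map_mk' [Finite G] [Fact p.Prime] {T K : Subgroup G}
    [K.Normal] (hH : IsStronglyPEmbedded p (normalizer (T : Set G))) (hT : IsPGroup p T)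
    (hTdvd : p ∣ Nat.card T) (hK : ¬ p ∣ Nat.card K) (hTK : ¬ (T ⊔ K).Normal) :
    IsStronglyPEmbedded p (normalizer ((T.map (mk' K) : Subgroup (G ⧸ K)) : Set (G ⧸ K))) := by
  set π := mk' K
  set H' := normalizer ((T.map π : Subgroup (G ⧸ K)) : Set (G ⧸ K))
  have hHH' : (normalizer (T : Set G)).map π ≤ H' := le_normalizer_map π
  refine ⟨fun htop => hTK ?_, ?_, fun g' hg' hdvd => ?_⟩
  · have hcomap : H'.comap π = normalizer ((T ⊔ K : Subgroup G) : Set G) := by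
      rw [comap_normalizer_eq_of_surjective _ (mk'_surjective K), comap_map_eq, ker_mk']
    rw [← normalizer_eq_top_iff, ← hcomap, htop, comap_top]
  · exact (dvd_card_map_mk' hH.2.1 hK).trans (card_dvd_of_le hHH')
  obtain ⟨g, rfl⟩ := mk'_surjective K g'
  obtain ⟨⟨x, hx⟩, hxo⟩ := exists_prime_orderOf_dvd_card' p hdvd
  rw [orderOf_mk] at hxo
  obtain ⟨hxH', hxg⟩ := mem_inf.mp hx
  obtain ⟨s, hsH, hs, hso⟩ := hH.exists_lift_of_orderOf_eq hT hTdvd le_normalizer hK hxo hxH'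
  have hHg := hH.conj_smul g
  rw [conj_smul_normalizer] at hHg
  have hxg' : x ∈ normalizer (((MulAut.conj g • T).map π : Subgroup (G ⧸ K)) : Set (G ⧸ K)) := by
    rwa [map_conj_smul, ← conj_smul_normalizer]
  have hTg : p ∣ Nat.card ↥(MulAut.conj g • T) := card_conj_smul g T ▸ hTdvd
  obtain ⟨s', hs'H, hs', hso'⟩ :=
    hHg.exists_lift_of_orderOf_eq (hT.map _) hTg le_normalizer hK hxo hxg'
  obtain ⟨w, hw, hws⟩ := exists_conj_smul_zpowers_eq hK hxo hs hs' hso hso'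
  have hwg : w * g ∈ normalizer (T : Set G) := by
    refine hH.mem_of_le_conj_smul (by rw [Nat.card_zpowers, hso]) (zpowers_le.mpr hsH) ?_
    rw [← hws, map_mul, mul_smul, pointwise_smul_le_pointwise_smul_iff, conj_smul_normalizer]
    exact zpowers_le.mpr hs'H
  have hwH' : π w ∈ H' := zpowers_le.mpr hxH' hw
  apply hg'
  simpa [π] using H'.mul_mem (H'.inv_mem hwH') (hHH' (mem_map_of_mem π hwg))

end

theorem stmt_13_general (p : ℕ) (hp : p.Prime) (G : Type*) [Group G] [Finite G]
    (ι : Type*) (K : ι → Subgroup G) [∀ i, (K i).Normal]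
    (hinf : (⨅ i, K i) = ⊥)
    (T : Subgroup G) (hT : IsPGroup p ↥T)
    (hNT : IsStronglyPEmbedded p (Subgroup.normalizer (T : Set G))) :
    ∃ j : ι, ¬ p ∣ Nat.card (K j) ∧
      ∃ H' : Subgroup (G ⧸ K j), IsStronglyPEmbedded p H' := by
  have := Fact.mk hp
  have hTdvd : p ∣ Nat.card T := hT.card_eq_or_dvd.resolve_left fun h => hNT.1 <| by
    rw [card_eq_one.mp h]
    exact normalizer_eq_top_iff.mpr inferInstance
  obtain ⟨j, hj⟩ : ∃ j, ¬ (T ⊔ K j).Normal := by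
    by_contra! h
    exact hNT.not_normal_of_isPGroup (hT.iInf_sup hinf) hTdvd (le_iInf fun i => le_sup_left)
      le_normalizer (normal_iInf_normal h)
  have hKj : ¬ p ∣ Nat.card (K j) := fun hdvd => hj (hNT.sup_normal_of_dvd_card hdvd)
  exact ⟨j, hKj, _, hNT.normalizer_map_mk' hT hTdvd hKj hj⟩

/-- **Statement 13.** Let `p` be a prime and `G` a finite group having a strongly
`p`-embedded subgroup.  Let `(K i)` be a finite family of normal subgroups of `G` with
`⋂ K i = 1`, and `J = {i : p ∤ |K i|}`.  Assume there is a `p`-subgroup `T ≤ G` whose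
normalizer `N_G(T)` is strongly `p`-embedded in `G`.  Then there is `j ∈ J` such that
`G/K j` has a strongly `p`-embedded subgroup. -/
theorem stmt_13 (p : ℕ) (hp : p.Prime) (G : Type*) [Group G] [Finite G]
    (hG : ∃ H : Subgroup G, IsStronglyPEmbedded p H)
    (ι : Type*) [Finite ι] (K : ι → Subgroup G) [∀ i, (K i).Normal]
    (hinf : (⨅ i, K i) = ⊥)
    (T : Subgroup G) (hT : IsPGroup p ↥T)
    (hNT : IsStronglyPEmbedded p (Subgroup.normalizer (T : Set G))) :
    ∃ j : ι, ¬ p ∣ Nat.card (K j) ∧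
      ∃ H' : Subgroup (G ⧸ K j), IsStronglyPEmbedded p H' :=
  stmt_13_general p hp G ι K hinf T hT hNT
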